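/- arXiv:2108.03365 — 9 statements merged into one kernel-verified Lean document; each statement's English description precedes it below -/
import Mathlib

section
/- Define the hard thresholding set-valued map H_γ on R^n componentwise by (H_γ(c))_i = {c_i} if |c_i| > γ, {0, c_i} if |c_i| = γ, and {0} if |c_i| < γ. If γ_k → γ, x_k → x, y_k → y with γ_k, γ > 0, and x_k ∈ H_{γ_k}(y_k) for all k, then x ∈ H_γ(y). -/
open Filter

/-- Membership in the set-valued hard thresholding operator `H_γ(c)`:
`x ∈ H_γ(c)` iff componentwise `x i = c i` when `|c i| > γ`, `x i ∈ {0, c i}`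
when `|c i| = γ`, and `x i = 0` when `|c i| < γ`. -/
def memHardThresh {n : ℕ} (γ : ℝ) (c x : EuclideanSpace ℝ (Fin n)) : Prop :=
  ∀ i : Fin n,
    (γ < |c i| → x i = c i) ∧
    (|c i| = γ → x i = 0 ∨ x i = c i) ∧
    (|c i| < γ → x i = 0)

theorem hardThresh_closed {n : ℕ} (γ : ℝ) (hγ : 0 < γ)
    (γseq : ℕ → ℝ) (hγseq : ∀ k, 0 < γseq k)
    (x y : ℕ → EuclideanSpace ℝ (Fin n)) (x₀ y₀ : EuclideanSpace ℝ (Fin n))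
    (hγlim : Tendsto γseq atTop (nhds γ))
    (hxlim : Tendsto x atTop (nhds x₀))
    (hylim : Tendsto y atTop (nhds y₀))
    (hmem : ∀ k, memHardThresh (γseq k) (y k) (x k)) :
    memHardThresh γ y₀ x₀ := by
  intro i
  have hxi : Tendsto (fun k => x k i) atTop (nhds (x₀ i)) :=
    ((EuclideanSpace.proj (𝕜 := ℝ) i).continuous.tendsto x₀).comp hxlim
  have hyi : Tendsto (fun k => y k i) atTop (nhds (y₀ i)) :=
    ((EuclideanSpace.proj (𝕜 := ℝ) i).continuous.tendsto y₀).comp hylim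
  have habs : Tendsto (fun k => |y k i|) atTop (nhds |y₀ i|) :=
    (continuous_abs.tendsto _).comp hyi
  -- in all cases each x k i is 0 or y k i
  have hall : ∀ k, x k i = 0 ∨ x k i = y k i := by
    intro k
    obtain ⟨h1, h2, h3⟩ := hmem k i
    rcases lt_trichotomy (|y k i|) (γseq k) with h | h | h
    · exact Or.inl (h3 h)
    · exact h2 h
    · exact Or.inr (h1 h)
  have hmix : x₀ i = 0 ∨ x₀ i = y₀ i := by
    by_cases h0 : ∃ᶠ k in atTop, x k i = 0
    · left
      rw [frequently_iff_neBot] at h0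
      have t1 : Tendsto (fun k => x k i) (atTop ⊓ 𝓟 {k | x k i = 0}) (nhds (x₀ i)) :=
        hxi.mono_left inf_le_left
      have t2 : Tendsto (fun k => x k i) (atTop ⊓ 𝓟 {k | x k i = 0}) (nhds 0) := by
        have : ∀ᶠ k in atTop ⊓ 𝓟 {k | x k i = 0}, x k i = 0 :=
          eventually_inf_principal.2 (Eventually.of_forall fun k hk => hk)
        exact Tendsto.congr' (this.mono fun k hk => hk.symm) tendsto_const_nhds
      exact tendsto_nhds_unique t1 t2
    · right
      rw [not_frequently] at h0
      have hev : ∀ᶠ k in atTop, x k i = y k i :=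
        h0.mono fun k hk => (hall k).resolve_left hk
      exact tendsto_nhds_unique (hxi.congr' hev) hyi
  refine ⟨?_, fun _ => hmix, ?_⟩
  · intro hlt
    have hev : ∀ᶠ k in atTop, γseq k < |y k i| := hγlim.eventually_lt habs hlt
    have hev' : ∀ᶠ k in atTop, x k i = y k i :=
      hev.mono fun k hk => (hmem k i).1 hk
    exact tendsto_nhds_unique (hxi.congr' hev') hyi
  · intro hlt
    have hev : ∀ᶠ k in atTop, |y k i| < γseq k := habs.eventually_lt hγlim hlt
    have hev' : ∀ᶠ k in atTop, x k i = 0 :=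
      hev.mono fun k hk => (hmem k i).2.2 hk
    exact tendsto_nhds_unique (hxi.congr' hev') tendsto_const_nhds
end

section
/- Let λ, L, μ > 0 and let f : R^n → R be differentiable. A point x is a solution of min_z λ‖z‖₀ + (L/2)‖z − y + ∇f(y)/L‖² + (μ/2)‖z − y‖² if and only if x ∈ H_γ(y − ∇f(y)/(L+μ)) where γ = sqrt(2λ/(L+μ)) and H_γ is the set-valued hard thresholding operator. -/
open scoped Classical

/-- `‖x‖₀`: the number of nonzero components of `x`. -/
noncomputable def norm0 {n : ℕ} (x : EuclideanSpace ℝ (Fin n)) : ℕ :=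
  (Finset.univ.filter fun i => x i ≠ 0).card

/-! Completing the square, `L/2 ‖z - y + ∇f(y)/L‖² + μ/2 ‖z - y‖²` equals `(L+μ)/2 ‖z - c‖²`
up to a constant, where `c = y - ∇f(y)/(L+μ)`. The objective `λ‖z‖₀ + (L+μ)/2 ‖z - c‖²` is then a
sum of one-variable functions of the coordinates, so it is minimized coordinatewise. In one
variable a minimizer is either `0`, with value `(L+μ)/2 c²`, or `c`, with value at most `λ`;
comparing the two values is comparing `|c|` with `γ = √(2λ/(L+μ))`. -/

open Finset

lemma half_mul_norm_add_inv_smul_sq_add_half_mul_norm_sq {E : Type*} [NormedAddCommGroup E]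
    [InnerProductSpace ℝ E] {L μ : ℝ} (hL : L ≠ 0) (hLμ : L + μ ≠ 0) (w g : E) :
    L / 2 * ‖w + L⁻¹ • g‖ ^ 2 + μ / 2 * ‖w‖ ^ 2
      = (L + μ) / 2 * ‖w + (L + μ)⁻¹ • g‖ ^ 2
        + (‖g‖ ^ 2 / (2 * L) - ‖g‖ ^ 2 / (2 * (L + μ))) := by
  simp only [norm_add_sq_real, norm_smul, inner_smul_right, Real.norm_eq_abs, mul_pow, sq_abs]
  field_simp
  ring

theorem forall_sum_le_sum_iff {ι α M : Type*} [Fintype ι] [AddCommMonoid M] [PartialOrder M]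
    [IsOrderedCancelAddMonoid M] (φ : ι → α → M) (x : ι → α) :
    (∀ z : ι → α, ∑ i, φ i (x i) ≤ ∑ i, φ i (z i)) ↔ ∀ i t, φ i (x i) ≤ φ i t := by
  refine ⟨fun h i t => ?_, fun h z => sum_le_sum fun i _ => h i (z i)⟩
  have key := h (Function.update x i t)
  have hrest :
      ∑ j ∈ univ.erase i, φ j (Function.update x i t j) = ∑ j ∈ univ.erase i, φ j (x j) :=
    sum_congr rfl fun j hj => by rw [Function.update_of_ne (ne_of_mem_erase hj)]
  rw [← add_sum_erase _ _ (mem_univ i), ← add_sum_erase _ _ (mem_univ i), Function.update_self,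
    hrest] at key
  exact le_of_add_le_add_right key

noncomputable def l0Penalty (lam t : ℝ) : ℝ := if t = 0 then 0 else lam

lemma l0Penalty_zero (lam : ℝ) : l0Penalty lam 0 = 0 := if_pos rfl

lemma l0Penalty_of_ne_zero (lam : ℝ) {t : ℝ} (ht : t ≠ 0) : l0Penalty lam t = lam := if_neg ht

lemma l0Penalty_le {lam : ℝ} (hlam : 0 ≤ lam) (t : ℝ) : l0Penalty lam t ≤ lam := by
  unfold l0Penalty; split_ifs <;> linarith

lemma mul_norm0_add_mul_norm_sq_eq_sum {n : ℕ} (lam s : ℝ) (z c : EuclideanSpace ℝ (Fin n)) :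
    lam * (norm0 z : ℝ) + s * ‖z - c‖ ^ 2 = ∑ i, (l0Penalty lam (z i) + s * (z i - c i) ^ 2) := by
  rw [EuclideanSpace.norm_eq, Real.sq_sqrt (by positivity), norm0, card_filter]
  push_cast
  rw [mul_sum, mul_sum, ← sum_add_distrib]
  refine sum_congr rfl fun i _ => ?_
  by_cases h : z i = 0 <;> simp [h, l0Penalty, sq_abs]

theorem forall_l0Penalty_add_sq_le_iff {lam s c : ℝ} (hlam : 0 ≤ lam) (hs : 0 < s) (x : ℝ) :
    (∀ t, l0Penalty lam x + s * (x - c) ^ 2 ≤ l0Penalty lam t + s * (t - c) ^ 2)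
      ↔ (x = 0 ∧ s * c ^ 2 ≤ lam) ∨ (x = c ∧ lam ≤ s * c ^ 2) := by
  have hpen_c := l0Penalty_le hlam c
  constructor
  · intro h
    by_cases hx : x = 0
    · subst hx
      have hle_c := h c
      simp only [l0Penalty_zero, zero_sub, neg_sq, sub_self] at hle_c
      exact Or.inl ⟨rfl, by nlinarith⟩
    · have hle_zero := h 0
      have hle_c := h c
      simp only [l0Penalty_of_ne_zero lam hx, l0Penalty_zero, sub_self, zero_sub, neg_sq]
        at hle_zero hle_c
      have hxc : x = c := by
        have : (x - c) ^ 2 = 0 := by nlinarith [sq_nonneg (x - c)]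
        exact sub_eq_zero.mp (pow_eq_zero_iff two_ne_zero |>.mp this)
      subst hxc
      exact Or.inr ⟨rfl, by simpa using hle_zero⟩
  · rintro (⟨rfl, hsc⟩ | ⟨hxc, hsc⟩) t <;> rcases eq_or_ne t 0 with rfl | ht
    · rfl
    · rw [l0Penalty_zero, l0Penalty_of_ne_zero lam ht]
      nlinarith [sq_nonneg (t - c)]
    · simp only [hxc, sub_self, zero_sub, neg_sq, l0Penalty_zero]
      nlinarith
    · rw [hxc, l0Penalty_of_ne_zero lam ht]
      nlinarith [sq_nonneg (t - c)]

lemma abs_le_sqrt_div_iff {lam s c : ℝ} (hlam : 0 ≤ lam) (hs : 0 < s) :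
    |c| ≤ √(lam / s) ↔ s * c ^ 2 ≤ lam := by
  rw [← Real.sqrt_sq_eq_abs, Real.sqrt_le_sqrt_iff (by positivity), le_div_iff₀ hs, mul_comm]

lemma sqrt_div_le_abs_iff {lam s c : ℝ} (hs : 0 < s) :
    √(lam / s) ≤ |c| ↔ lam ≤ s * c ^ 2 := by
  rw [← Real.sqrt_sq_eq_abs, Real.sqrt_le_sqrt_iff (by positivity), div_le_iff₀ hs, mul_comm]

lemma hardThresh_coord_iff (γ c x : ℝ) :
    ((γ < |c| → x = c) ∧ (|c| = γ → x = 0 ∨ x = c) ∧ (|c| < γ → x = 0))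
      ↔ (x = 0 ∧ |c| ≤ γ) ∨ (x = c ∧ γ ≤ |c|) := by
  rcases lt_trichotomy γ |c| with h | h | h <;> grind

theorem subproblem_solution_iff_hardThresh_general {n : ℕ}
    (gradf : EuclideanSpace ℝ (Fin n) → EuclideanSpace ℝ (Fin n))
    (lam L μ : ℝ) (hlam : 0 < lam) (hL : 0 < L) (hμ : 0 < μ)
    (y x : EuclideanSpace ℝ (Fin n)) :
    (∀ z : EuclideanSpace ℝ (Fin n),
        lam * (norm0 x : ℝ) + L / 2 * ‖x - y + (1 / L) • gradf y‖ ^ 2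
          + μ / 2 * ‖x - y‖ ^ 2
        ≤ lam * (norm0 z : ℝ) + L / 2 * ‖z - y + (1 / L) • gradf y‖ ^ 2
          + μ / 2 * ‖z - y‖ ^ 2)
    ↔ memHardThresh (Real.sqrt (2 * lam / (L + μ)))
        (y - (1 / (L + μ)) • gradf y) x := by
  set g := gradf y
  set c := y - (1 / (L + μ)) • g
  set s := (L + μ) / 2
  have hs : 0 < s := by positivity
  have hobj : ∀ z : EuclideanSpace ℝ (Fin n),
      lam * (norm0 z : ℝ) + L / 2 * ‖z - y + (1 / L) • g‖ ^ 2 + μ / 2 * ‖z - y‖ ^ 2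
        = ∑ i, (l0Penalty lam (z i) + s * (z i - c i) ^ 2)
          + (‖g‖ ^ 2 / (2 * L) - ‖g‖ ^ 2 / (2 * (L + μ))) := by
    intro z
    have hzc : z - c = z - y + (L + μ)⁻¹ • g := by simp only [c, one_div]; abel
    rw [add_assoc, one_div, half_mul_norm_add_inv_smul_sq_add_half_mul_norm_sq hL.ne'
      (by positivity), ← hzc, ← mul_norm0_add_mul_norm_sq_eq_sum]
    ring
  have hγ : √(2 * lam / (L + μ)) = √(lam / s) := by
    rw [div_div_eq_mul_div, mul_comm]
  simp only [hobj, add_le_add_iff_right, (WithLp.toLp_surjective 2).forall]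
  rw [forall_sum_le_sum_iff (fun i t => l0Penalty lam t + s * (t - c i) ^ 2) x.ofLp]
  refine forall_congr' fun i => ?_
  rw [forall_l0Penalty_add_sq_le_iff hlam.le hs, hardThresh_coord_iff, hγ,
    abs_le_sqrt_div_iff hlam.le hs, sqrt_div_le_abs_iff hs]

theorem subproblem_solution_iff_hardThresh {n : ℕ}
    (f : EuclideanSpace ℝ (Fin n) → ℝ)
    (gradf : EuclideanSpace ℝ (Fin n) → EuclideanSpace ℝ (Fin n))
    (hf : ∀ z, HasGradientAt f (gradf z) z)
    (lam L μ : ℝ) (hlam : 0 < lam) (hL : 0 < L) (hμ : 0 < μ)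
    (y x : EuclideanSpace ℝ (Fin n)) :
    (∀ z : EuclideanSpace ℝ (Fin n),
        lam * (norm0 x : ℝ) + L / 2 * ‖x - y + (1 / L) • gradf y‖ ^ 2
          + μ / 2 * ‖x - y‖ ^ 2
        ≤ lam * (norm0 z : ℝ) + L / 2 * ‖z - y + (1 / L) • gradf y‖ ^ 2
          + μ / 2 * ‖z - y‖ ^ 2)
    ↔ memHardThresh (Real.sqrt (2 * lam / (L + μ)))
        (y - (1 / (L + μ)) • gradf y) x :=
  subproblem_solution_iff_hardThresh_general gradf lam L μ hlam hL hμ y x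
end

section
/- Let f : R^n → R be convex differentiable with ∇f L-Lipschitz, λ, μ > 0, and H(x) = f(x) + λ‖x‖₀. Suppose x ∈ argmin_z λ‖z‖₀ + (L/2)‖z − y + ∇f(y)/L‖² + (μ/2)‖z − y‖², and suppose ‖y‖₀ ≤ ‖w‖₀ and f(y) ≤ f(w) for some w. Then H(x) + (μ/2)‖x − y‖² ≤ H(w). -/
/-!
Comparing the value of the proximal subproblem at its minimiser `x` with its value at `y` and
expanding the square gives `λ‖x‖₀ + ⟪∇f y, x - y⟫ + (L + μ)/2 ‖x - y‖² ≤ λ‖y‖₀`, while the descent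
lemma gives `f x ≤ f y + ⟪∇f y, x - y⟫ + L/2 ‖x - y‖²`. Adding the two yields
`H x + μ/2 ‖x - y‖² ≤ H y`, and `H y ≤ H w` by the hypotheses on `w`.
-/

open scoped Classical

open scoped RealInnerProductSpace

section ProximalGradient

variable {E : Type*} [NormedAddCommGroup E] [InnerProductSpace ℝ E]

theorem half_mul_norm_add_inv_smul_sq {L : ℝ} (hL : L ≠ 0) (v g : E) :
    L / 2 * ‖v + (1 / L) • g‖ ^ 2 = L / 2 * ‖v‖ ^ 2 + ⟪g, v⟫ + L / 2 * ‖(1 / L) • g‖ ^ 2 := by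
  rw [norm_add_sq_real, real_inner_smul_right, real_inner_comm]
  field_simp

/-- `g` plays the role of `∇f y`. -/
noncomputable def proxGradModel (r : E → ℝ) (L μ : ℝ) (g y z : E) : ℝ :=
  r z + L / 2 * ‖z - y + (1 / L) • g‖ ^ 2 + μ / 2 * ‖z - y‖ ^ 2

variable [CompleteSpace E] {f : E → ℝ} {gradf : E → E}

theorem HasGradientAt.hasDerivAt_comp_add_smul {g y v : E} {t : ℝ}
    (hf : HasGradientAt f g (y + t • v)) :
    HasDerivAt (fun s : ℝ => f (y + s • v)) ⟪g, v⟫ t := by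
  have hline : HasDerivAt (fun s : ℝ => y + s • v) v t := by
    simpa using ((hasDerivAt_id t).smul_const v).const_add y
  exact (hasGradientAt_iff_hasFDerivAt.mp hf).comp_hasDerivAt t hline

theorem le_add_inner_add_half_mul_norm_sub_sq (hf : ∀ z, HasGradientAt f (gradf z) z)
    {L : ℝ} {x y : E} (hLip : ∀ z, ‖gradf z - gradf y‖ ≤ L * ‖z - y‖) :
    f x ≤ f y + ⟪gradf y, x - y⟫ + L / 2 * ‖x - y‖ ^ 2 := by
  set v := x - y
  -- the gap between `f` and its quadratic upper model along the segment; it is antitone for `t ≥ 0`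
  set φ : ℝ → ℝ := fun t => f (y + t • v) - t * ⟪gradf y, v⟫ - L / 2 * t ^ 2 * ‖v‖ ^ 2
  have hφ : ∀ t, HasDerivAt φ (⟪gradf (y + t • v), v⟫ - ⟪gradf y, v⟫ - L * t * ‖v‖ ^ 2) t := by
    intro t
    have := (((hf (y + t • v)).hasDerivAt_comp_add_smul (y := y) (v := v)).sub
      ((hasDerivAt_id t).mul_const ⟪gradf y, v⟫)).sub
      (((hasDerivAt_pow 2 t).const_mul (L / 2)).mul_const (‖v‖ ^ 2))
    exact this.congr_deriv (by ring)
  have hφ_nonpos : ∀ t ∈ interior (Set.Ici (0 : ℝ)), deriv φ t ≤ 0 := by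
    rw [interior_Ici]
    intro t (ht : 0 < t)
    have hslope : ⟪gradf (y + t • v) - gradf y, v⟫ ≤ L * t * ‖v‖ ^ 2 := calc
      ⟪gradf (y + t • v) - gradf y, v⟫
        ≤ ‖gradf (y + t • v) - gradf y‖ * ‖v‖ := real_inner_le_norm _ _
      _ ≤ L * (t * ‖v‖) * ‖v‖ := by
          gcongr
          simpa [norm_smul, abs_of_pos ht] using hLip (y + t • v)
      _ = L * t * ‖v‖ ^ 2 := by ring
    rw [(hφ t).deriv]
    rw [inner_sub_left] at hslope
    linarith
  have hanti : AntitoneOn φ (Set.Ici 0) :=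
    antitoneOn_of_deriv_nonpos (convex_Ici 0) (fun t _ => (hφ t).continuousAt.continuousWithinAt)
      (fun t _ => (hφ t).differentiableAt.differentiableWithinAt) hφ_nonpos
  have hφ_le : φ 1 ≤ φ 0 := hanti Set.self_mem_Ici (Set.mem_Ici.mpr zero_le_one) zero_le_one
  simp only [φ, v, one_smul, zero_smul, add_sub_cancel, add_zero] at hφ_le
  linarith

theorem add_add_half_mul_norm_sub_sq_le_of_proxGradModel_le
    (hf : ∀ z, HasGradientAt f (gradf z) z) {L μ : ℝ} (hL : L ≠ 0) {x y : E}
    (hLip : ∀ z, ‖gradf z - gradf y‖ ≤ L * ‖z - y‖)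
    {r : E → ℝ} (hx : proxGradModel r L μ (gradf y) y x ≤ proxGradModel r L μ (gradf y) y y) :
    f x + r x + μ / 2 * ‖x - y‖ ^ 2 ≤ f y + r y := by
  have hdescent := le_add_inner_add_half_mul_norm_sub_sq (x := x) hf hLip
  simp only [proxGradModel, half_mul_norm_add_inv_smul_sq hL, sub_self, norm_zero,
    inner_zero_right] at hx
  linarith

end ProximalGradient

theorem sufficient_decrease_general {n : ℕ}
    (f : EuclideanSpace ℝ (Fin n) → ℝ)
    (gradf : EuclideanSpace ℝ (Fin n) → EuclideanSpace ℝ (Fin n))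
    (hf : ∀ z, HasGradientAt f (gradf z) z)
    (L lam μ : ℝ) (hL : 0 < L) (hlam : 0 < lam)
    (hLip : ∀ u v, ‖gradf u - gradf v‖ ≤ L * ‖u - v‖)
    (x y w : EuclideanSpace ℝ (Fin n))
    (hx : ∀ z : EuclideanSpace ℝ (Fin n),
        lam * (norm0 x : ℝ) + L / 2 * ‖x - y + (1 / L) • gradf y‖ ^ 2
          + μ / 2 * ‖x - y‖ ^ 2
        ≤ lam * (norm0 z : ℝ) + L / 2 * ‖z - y + (1 / L) • gradf y‖ ^ 2
          + μ / 2 * ‖z - y‖ ^ 2)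
    (h0 : norm0 y ≤ norm0 w) (hfy : f y ≤ f w) :
    f x + lam * (norm0 x : ℝ) + μ / 2 * ‖x - y‖ ^ 2
      ≤ f w + lam * (norm0 w : ℝ) := by
  have hdecrease := add_add_half_mul_norm_sub_sq_le_of_proxGradModel_le
    (r := fun z => lam * (norm0 z : ℝ)) hf hL.ne' (fun z => hLip z y) (hx y)
  have hnorm0 : lam * (norm0 y : ℝ) ≤ lam * (norm0 w : ℝ) :=
    mul_le_mul_of_nonneg_left (by exact_mod_cast h0) hlam.le
  linarith

theorem sufficient_decrease {n : ℕ}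
    (f : EuclideanSpace ℝ (Fin n) → ℝ)
    (gradf : EuclideanSpace ℝ (Fin n) → EuclideanSpace ℝ (Fin n))
    (hconv : ConvexOn ℝ Set.univ f)
    (hf : ∀ z, HasGradientAt f (gradf z) z)
    (L lam μ : ℝ) (hL : 0 < L) (hlam : 0 < lam) (hμ : 0 < μ)
    (hLip : ∀ u v, ‖gradf u - gradf v‖ ≤ L * ‖u - v‖)
    (x y w : EuclideanSpace ℝ (Fin n))
    (hx : ∀ z : EuclideanSpace ℝ (Fin n),
        lam * (norm0 x : ℝ) + L / 2 * ‖x - y + (1 / L) • gradf y‖ ^ 2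
          + μ / 2 * ‖x - y‖ ^ 2
        ≤ lam * (norm0 z : ℝ) + L / 2 * ‖z - y + (1 / L) • gradf y‖ ^ 2
          + μ / 2 * ‖z - y‖ ^ 2)
    (h0 : norm0 y ≤ norm0 w) (hfy : f y ≤ f w) :
    f x + lam * (norm0 x : ℝ) + μ / 2 * ‖x - y‖ ^ 2
      ≤ f w + lam * (norm0 w : ℝ) :=
  sufficient_decrease_general f gradf hf L lam μ hL hlam hLip x y w hx h0 hfy
end

section
/- Let f : R^n → R be convex differentiable, bounded below, with L-Lipschitz gradient, and let {x_k}, {y_k} be sequences generated by the VMEPIHT method with parameters λ, μ > 0. Then ∑_{k=1}^∞ ‖x_k − y_k‖² < ∞, and in particular ‖x_k − y_k‖ → 0. -/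
open Filter
open scoped Classical

/-!
The merit `H(y_k) = f(y_k) + λ‖y_k‖₀` decreases by at least `(μ/2)‖x_k - y_k‖²` per iteration:
comparing the minimizer `x_k` of the PIHT subproblem with the competitor `y_k` and bounding `f(x_k)`
by the descent lemma for the `L`-Lipschitz gradient gives `H(x_k) + (μ/2)‖x_k - y_k‖² ≤ H(y_k)`,
and the variable metric step does not increase `H`. Since `H` is bounded below, the decrements
are summable.
-/

open Set

section Descent

variable {E : Type*} [NormedAddCommGroup E] [InnerProductSpace ℝ E]

theorem le_add_inner_add_sq_of_lipschitz_gradient [CompleteSpace E] {f : E → ℝ} {f' : E → E}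
    {L : ℝ} (hf : ∀ z, HasGradientAt f (f' z) z) (hLip : ∀ u v, ‖f' u - f' v‖ ≤ L * ‖u - v‖)
    (u v : E) :
    f u ≤ f v + inner ℝ (f' v) (u - v) + L / 2 * ‖u - v‖ ^ 2 := by
  set d := u - v
  -- `f` on the segment minus its quadratic majorant; the Lipschitz bound makes it antitone.
  set φ : ℝ → ℝ := fun t => f (v + t • d) - t * inner ℝ (f' v) d - L / 2 * t ^ 2 * ‖d‖ ^ 2
  have hφ : ∀ t, HasDerivAt φ
      (inner ℝ (f' (v + t • d)) d - inner ℝ (f' v) d - L * t * ‖d‖ ^ 2) t := by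
    intro t
    have hline : HasDerivAt (fun t : ℝ => v + t • d) d t := by
      simpa using ((hasDerivAt_id t).smul_const d).const_add v
    have hcomp := (hf (v + t • d)).hasFDerivAt.comp_hasDerivAt t hline
    simp only [InnerProductSpace.toDual_apply_apply] at hcomp
    refine ((hcomp.sub ((hasDerivAt_id t).mul_const (inner ℝ (f' v) d))).sub
      (((hasDerivAt_pow 2 t).const_mul (L / 2)).mul_const (‖d‖ ^ 2))).congr_deriv ?_
    ring
  have hφ_nonpos : ∀ t ∈ interior (Icc (0 : ℝ) 1),
      inner ℝ (f' (v + t • d)) d - inner ℝ (f' v) d - L * t * ‖d‖ ^ 2 ≤ 0 := by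
    intro t ht
    have ht0 : 0 ≤ t := by rw [interior_Icc] at ht; exact ht.1.le
    have hstep : ‖f' (v + t • d) - f' v‖ ≤ L * (t * ‖d‖) := by
      simpa [norm_smul, abs_of_nonneg ht0] using hLip (v + t • d) v
    calc inner ℝ (f' (v + t • d)) d - inner ℝ (f' v) d - L * t * ‖d‖ ^ 2
        = inner ℝ (f' (v + t • d) - f' v) d - L * t * ‖d‖ ^ 2 := by rw [inner_sub_left]
      _ ≤ ‖f' (v + t • d) - f' v‖ * ‖d‖ - L * t * ‖d‖ ^ 2 := by
          gcongr; exact real_inner_le_norm _ _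
      _ ≤ L * (t * ‖d‖) * ‖d‖ - L * t * ‖d‖ ^ 2 := by gcongr
      _ = 0 := by ring
  have hanti : AntitoneOn φ (Icc 0 1) :=
    antitoneOn_of_hasDerivWithinAt_nonpos (convex_Icc 0 1)
      (fun t _ => (hφ t).continuousAt.continuousWithinAt)
      (fun t _ => (hφ t).hasDerivWithinAt) hφ_nonpos
  have h10 : φ 1 ≤ φ 0 := hanti (by simp) (by simp) zero_le_one
  simp only [φ, d, one_smul, add_sub_cancel, zero_smul, add_zero] at h10
  linarith

theorem sufficient_decrease_of_prox_minimizer {f φ : E → ℝ} {g x y : E} {L μ : ℝ} (hL : L ≠ 0)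
    (hdesc : f x ≤ f y + inner ℝ g (x - y) + L / 2 * ‖x - y‖ ^ 2)
    (hmin : ∀ z, φ x + L / 2 * ‖x - y + (1 / L) • g‖ ^ 2 + μ / 2 * ‖x - y‖ ^ 2
        ≤ φ z + L / 2 * ‖z - y + (1 / L) • g‖ ^ 2 + μ / 2 * ‖z - y‖ ^ 2) :
    f x + φ x + μ / 2 * ‖x - y‖ ^ 2 ≤ f y + φ y := by
  have hy := hmin y
  -- Expanding the square turns the prox objective into the quadratic model of `f` at `y`.
  have hexpand : L / 2 * ‖x - y + (1 / L) • g‖ ^ 2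
      = L / 2 * ‖x - y‖ ^ 2 + inner ℝ g (x - y) + L / 2 * ‖(1 / L) • g‖ ^ 2 := by
    rw [norm_add_sq_real, real_inner_smul_right, real_inner_comm]
    field_simp
  rw [hexpand, sub_self, zero_add, norm_zero] at hy
  norm_num at hy
  linarith

end Descent

theorem summable_of_add_le_of_forall_le {H a : ℕ → ℝ} {B : ℝ} (ha : ∀ k, 0 ≤ a k)
    (hB : ∀ k, B ≤ H k) (hstep : ∀ k, H (k + 1) + a k ≤ H k) : Summable a := by
  refine summable_of_sum_range_le (c := H 0 - B) ha fun m => ?_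
  calc ∑ k ∈ Finset.range m, a k
      ≤ ∑ k ∈ Finset.range m, (H k - H (k + 1)) :=
        Finset.sum_le_sum fun k _ => by linarith [hstep k]
    _ = H 0 - H m := Finset.sum_range_sub' H m
    _ ≤ H 0 - B := by linarith [hB m]

theorem vmepiht_summable_residual_general {n : ℕ}
    (f : EuclideanSpace ℝ (Fin n) → ℝ)
    (gradf : EuclideanSpace ℝ (Fin n) → EuclideanSpace ℝ (Fin n))
    (hf : ∀ z, HasGradientAt f (gradf z) z)
    (hbdd : ∃ B : ℝ, ∀ z, B ≤ f z)
    (L lam μ : ℝ) (hL : 0 < L) (hlam : 0 < lam) (hμ : 0 < μ)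
    (hLip : ∀ u v, ‖gradf u - gradf v‖ ≤ L * ‖u - v‖)
    (x y : ℕ → EuclideanSpace ℝ (Fin n))
    -- x k solves the PIHT subproblem at y k
    (hx : ∀ k, ∀ z : EuclideanSpace ℝ (Fin n),
        lam * (norm0 (x k) : ℝ) + L / 2 * ‖x k - y k + (1 / L) • gradf (y k)‖ ^ 2
          + μ / 2 * ‖x k - y k‖ ^ 2
        ≤ lam * (norm0 z : ℝ) + L / 2 * ‖z - y k + (1 / L) • gradf (y k)‖ ^ 2
          + μ / 2 * ‖z - y k‖ ^ 2)
    -- the variable metric step decreases f and does not increase the support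
    (hdec : ∀ k, f (y (k + 1)) ≤ f (x k))
    (hsupp : ∀ k, norm0 (y (k + 1)) ≤ norm0 (x k)) :
    Summable (fun k => ‖x k - y k‖ ^ 2) ∧
      Tendsto (fun k => ‖x k - y k‖) atTop (nhds 0) := by
  obtain ⟨B, hB⟩ := hbdd
  set merit : ℕ → ℝ := fun k => f (y k) + lam * (norm0 (y k) : ℝ)
  have hstep : ∀ k, merit (k + 1) + μ / 2 * ‖x k - y k‖ ^ 2 ≤ merit k := fun k => by
    have hdecrease := sufficient_decrease_of_prox_minimizer (φ := fun z => lam * (norm0 z : ℝ))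
      hL.ne' (le_add_inner_add_sq_of_lipschitz_gradient hf hLip (x k) (y k)) (hx k)
    have hsupp' : lam * (norm0 (y (k + 1)) : ℝ) ≤ lam * (norm0 (x k) : ℝ) := by
      gcongr; exact hsupp k
    simp only [merit]
    linarith [hdec k]
  have hmerit_bdd : ∀ k, B ≤ merit k := fun k => by
    have : 0 ≤ lam * (norm0 (y k) : ℝ) := by positivity
    linarith [hB (y k)]
  have hsum : Summable fun k => ‖x k - y k‖ ^ 2 :=
    (summable_mul_left_iff (by positivity : μ / 2 ≠ 0)).mp <|
      summable_of_add_le_of_forall_le (fun k => by positivity) hmerit_bdd hstep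
  refine ⟨hsum, ?_⟩
  simpa [Real.sqrt_sq (norm_nonneg _)] using hsum.tendsto_atTop_zero.sqrt

theorem vmepiht_summable_residual {n : ℕ}
    (f : EuclideanSpace ℝ (Fin n) → ℝ)
    (gradf : EuclideanSpace ℝ (Fin n) → EuclideanSpace ℝ (Fin n))
    (hconv : ConvexOn ℝ Set.univ f)
    (hf : ∀ z, HasGradientAt f (gradf z) z)
    (hbdd : ∃ B : ℝ, ∀ z, B ≤ f z)
    (L lam μ : ℝ) (hL : 0 < L) (hlam : 0 < lam) (hμ : 0 < μ)
    (hLip : ∀ u v, ‖gradf u - gradf v‖ ≤ L * ‖u - v‖)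
    (x y : ℕ → EuclideanSpace ℝ (Fin n))
    -- x k solves the PIHT subproblem at y k
    (hx : ∀ k, ∀ z : EuclideanSpace ℝ (Fin n),
        lam * (norm0 (x k) : ℝ) + L / 2 * ‖x k - y k + (1 / L) • gradf (y k)‖ ^ 2
          + μ / 2 * ‖x k - y k‖ ^ 2
        ≤ lam * (norm0 z : ℝ) + L / 2 * ‖z - y k + (1 / L) • gradf (y k)‖ ^ 2
          + μ / 2 * ‖z - y k‖ ^ 2)
    -- the variable metric step decreases f and does not increase the support
    (hdec : ∀ k, f (y (k + 1)) ≤ f (x k))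
    (hsupp : ∀ k, norm0 (y (k + 1)) ≤ norm0 (x k)) :
    Summable (fun k => ‖x k - y k‖ ^ 2) ∧
      Tendsto (fun k => ‖x k - y k‖) atTop (nhds 0) :=
  vmepiht_summable_residual_general f gradf hf hbdd L lam μ hL hlam hμ hLip x y hx hdec hsupp
end

section
/- Under the VMEPIHT iteration, the support complement sets satisfy: there exists k₀ such that for all k ≥ k₀, the zero-index set I(x_k) is constant. Equivalently, the support of the iterates changes only finitely often. -/
open Filter

lemma mono_bdd_eventually_const (f : ℕ → ℕ) (hf : Monotone f) (B : ℕ)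
    (hB : ∀ k, f k ≤ B) : ∃ k₀, ∀ k ≥ k₀, f k = f k₀ := by
  have hne : (Set.range f).Nonempty := ⟨f 0, 0, rfl⟩
  have hbd : BddAbove (Set.range f) := ⟨B, fun v ⟨k, hk⟩ => hk ▸ hB k⟩
  obtain ⟨k₀, hk₀⟩ := Nat.sSup_mem hne hbd
  refine ⟨k₀, fun k hk => le_antisymm ?_ (hf hk)⟩
  rw [hk₀]
  exact le_csSup hbd ⟨k, rfl⟩

lemma coord_abs_le_norm {n : ℕ} (v : EuclideanSpace ℝ (Fin n)) (i : Fin n) :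
    |v i| ≤ ‖v‖ := by
  rw [EuclideanSpace.norm_eq]
  have h1 : |v i| = Real.sqrt (‖v i‖ ^ 2) := by
    rw [Real.sqrt_sq_eq_abs, abs_norm, Real.norm_eq_abs]
  rw [h1]
  apply Real.sqrt_le_sqrt
  exact Finset.single_le_sum (fun j _ => sq_nonneg ‖v j‖) (Finset.mem_univ i)

theorem support_eventually_constant {n : ℕ}
    (x y : ℕ → EuclideanSpace ℝ (Fin n))
    (γ : ℝ) (hγ : 0 < γ)
    -- every nonzero component of x k has magnitude at least γ
    (hbig : ∀ k, ∀ i : Fin n, x k i ≠ 0 → γ ≤ |x k i|)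
    -- ‖x k − y k‖ → 0
    (hlim : Tendsto (fun k => ‖x k - y k‖) atTop (nhds 0))
    -- supp(y (k+1)) ⊆ supp(x k)
    (hsupp : ∀ k, ∀ i : Fin n, y (k + 1) i ≠ 0 → x k i ≠ 0) :
    ∃ k₀ : ℕ, ∀ k ≥ k₀, {i : Fin n | x k i = 0} = {i : Fin n | x k₀ i = 0} := by
  classical
  -- eventually ‖x k - y k‖ < γ
  obtain ⟨N, hN⟩ := (Metric.tendsto_atTop.mp hlim γ hγ)
  have hN' : ∀ k ≥ N, ‖x k - y k‖ < γ := by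
    intro k hk
    have := hN k hk
    rwa [Real.dist_eq, sub_zero, abs_of_nonneg (norm_nonneg _)] at this
  -- for k ≥ N, zero set of x k is contained in zero set of x (k+1)
  have key : ∀ k, N ≤ k → {i : Fin n | x k i = 0} ⊆ {i : Fin n | x (k + 1) i = 0} := by
    intro k hk i hi
    simp only [Set.mem_setOf_eq] at hi ⊢
    by_contra hne
    -- x (k+1) i ≠ 0, so |x (k+1) i| ≥ γ
    have h1 := hbig (k + 1) i hne
    -- |x (k+1) i - y (k+1) i| < γ
    have h2 : |x (k + 1) i - y (k + 1) i| < γ := by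
      have := coord_abs_le_norm (x (k + 1) - y (k + 1)) i
      have h3 := hN' (k + 1) (le_trans hk (Nat.le_succ k))
      calc |x (k + 1) i - y (k + 1) i| = |(x (k + 1) - y (k + 1)) i| := by
            simp [PiLp.sub_apply]
        _ ≤ ‖x (k + 1) - y (k + 1)‖ := coord_abs_le_norm _ i
        _ < γ := h3
    -- hence y (k+1) i ≠ 0
    have hy : y (k + 1) i ≠ 0 := by
      intro h0
      rw [h0, sub_zero] at h2
      exact absurd h1 (not_le.mpr h2)
    exact (hsupp k i hy) hi
  -- cardinality of zero set (as finset) is monotone from N on, bounded by n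
  set Z : ℕ → Finset (Fin n) := fun k => Finset.univ.filter (fun i => x k i = 0) with hZ
  have hZsub : ∀ k, N ≤ k → Z k ⊆ Z (k + 1) := by
    intro k hk i hi
    simp only [hZ, Finset.mem_filter, Finset.mem_univ, true_and] at hi ⊢
    exact key k hk hi
  have hmono : ∀ j j', N ≤ j → j ≤ j' → Z j ⊆ Z j' := by
    intro j j' hj hjj'
    induction j' with
    | zero =>
      have hj0 : j = 0 := Nat.le_zero.mp hjj'
      subst hj0; exact Finset.Subset.refl _
    | succ m ih =>
      rcases Nat.lt_or_ge j (m + 1) with h | h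
      · exact (ih (by omega)).trans (hZsub m (by omega))
      · have : j = m + 1 := by omega
        subst this; rfl
  -- the cardinalities form a monotone bounded sequence of naturals
  have hcard_mono : Monotone (fun j => (Z (N + j)).card) := by
    intro a b hab
    exact Finset.card_le_card (hmono (N + a) (N + b) (Nat.le_add_right _ _) (by omega))
  have hbdd : ∀ j, (Z (N + j)).card ≤ n := fun j =>
    le_trans (Finset.card_le_card (Finset.subset_univ _)) (by simp)
  obtain ⟨j₀, hj₀⟩ := mono_bdd_eventually_const (fun j => (Z (N + j)).card)
    hcard_mono n hbdd
  refine ⟨N + j₀, fun k hk => ?_⟩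
  have hsub : Z (N + j₀) ⊆ Z k := hmono (N + j₀) k (Nat.le_add_right _ _) hk
  have hcard : (Z k).card = (Z (N + j₀)).card := by
    have hk' : k = N + (k - N) := by omega
    rw [hk']
    exact hj₀ (k - N) (by omega)
  have hZeq : Z k = Z (N + j₀) := (Finset.eq_of_subset_of_card_le hsub (le_of_eq hcard)).symm
  ext i
  simp only [Set.mem_setOf_eq]
  constructor
  · intro h
    have : i ∈ Z k := by simp [hZ, h]
    rw [hZeq] at this
    simpa [hZ] using this
  · intro h
    have : i ∈ Z (N + j₀) := by simp [hZ, h]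
    rw [← hZeq] at this
    simpa [hZ] using this
end

section
/- Let f : R^n → R be convex differentiable and λ > 0, H(x) = f(x) + λ‖x‖₀. If x* satisfies x* ∈ H_γ(x* − ∇f(x*)/(L+μ)) with γ = sqrt(2λ/(L+μ)) (a fixed point of the hard-thresholding proximal map), then (∇f(x*))_i = 0 for every i with x*_i ≠ 0, and x* is a local minimizer of H. -/
open scoped Classical

/-!
On the support of a fixed point `x*` the thresholding operator returns its argument, so
`x*ᵢ = x*ᵢ - (∇f x*)ᵢ / (L + μ)` and the gradient vanishes there. Every convex `f` whose gradient
vanishes on the support of `x*` has `x*` as a local minimizer of `f + λ‖·‖₀`: near `x*` the support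
can only grow, each new coordinate `i` costs `λ`, and by the first-order convexity inequality `f`
drops by at most `|(∇f x*)ᵢ| |zᵢ|` along it, which is less than `λ` close to `x*`.
-/

open Filter Topology

theorem ConvexOn.add_fderiv_sub_le {E : Type*} [NormedAddCommGroup E] [NormedSpace ℝ E]
    {s : Set E} {f : E → ℝ} {f' : E →L[ℝ] ℝ} {x y : E} (hf : ConvexOn ℝ s f)
    (hx : x ∈ s) (hy : y ∈ s) (hf' : HasFDerivAt f f' x) :
    f x + f' (y - x) ≤ f y := by
  set ℓ : ℝ →ᵃ[ℝ] E := AffineMap.lineMap x y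
  have hline : ConvexOn ℝ (ℓ ⁻¹' s) (f ∘ ℓ) := hf.comp_affineMap ℓ
  have hderiv : HasDerivAt (f ∘ ℓ) (f' (y - x)) 0 := by
    have hf'0 : HasFDerivAt f f' (ℓ 0) := by simpa [ℓ] using hf'
    exact hf'0.comp_hasDerivAt (0 : ℝ) AffineMap.hasDerivAt_lineMap
  have hslope := hline.le_slope_of_hasDerivAt (by simpa [ℓ]) (by simpa [ℓ]) one_pos hderiv
  simp only [slope_def_field, Function.comp_apply, ℓ, AffineMap.lineMap_apply_zero,
    AffineMap.lineMap_apply_one, sub_zero, div_one] at hslope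
  linarith

theorem ConvexOn.add_inner_sub_le {F : Type*} [NormedAddCommGroup F] [InnerProductSpace ℝ F]
    [CompleteSpace F] {s : Set F} {f : F → ℝ} {g x y : F} (hf : ConvexOn ℝ s f)
    (hx : x ∈ s) (hy : y ∈ s) (hg : HasGradientAt f g x) :
    f x + inner ℝ g (y - x) ≤ f y := by
  simpa using hf.add_fderiv_sub_le hx hy hg.hasFDerivAt

theorem eventually_mul_ite_ne_zero_le_linear_add {a b lam : ℝ} (hlam : 0 < lam)
    (hab : a ≠ 0 → b = 0) :
    ∀ᶠ t in 𝓝 a,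
      lam * (if a ≠ 0 then 1 else 0) ≤ b * (t - a) + lam * (if t ≠ 0 then 1 else 0) := by
  by_cases ha : a = 0
  · subst ha
    have hsmall : ∀ᶠ t in 𝓝 (0 : ℝ), |b * t| < lam :=
      (by fun_prop : Continuous fun t : ℝ => |b * t|).continuousAt.eventually_lt
        continuousAt_const (by simpa using hlam)
    filter_upwards [hsmall] with t ht
    rcases eq_or_ne t 0 with rfl | ht0
    · simp
    · simp only [ne_eq, not_true_eq_false, if_false, ht0, not_false_eq_true, if_true, sub_zero]
      linarith [neg_abs_le (b * t)]
  · filter_upwards [eventually_ne_nhds ha] with t ht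
    simp [ha, ht, hab ha]

theorem norm0_eq_sum {n : ℕ} (x : EuclideanSpace ℝ (Fin n)) :
    (norm0 x : ℝ) = ∑ i, if x i ≠ 0 then 1 else 0 := by
  rw [norm0, Finset.card_filter]
  simp only [Nat.cast_sum, Nat.cast_ite, Nat.cast_one, Nat.cast_zero]

theorem isLocalMin_add_mul_norm0 {n : ℕ} {f : EuclideanSpace ℝ (Fin n) → ℝ}
    {x g : EuclideanSpace ℝ (Fin n)} {lam : ℝ} (hf : ConvexOn ℝ Set.univ f)
    (hg : HasGradientAt f g x) (hstat : ∀ i, x i ≠ 0 → g i = 0) (hlam : 0 < lam) :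
    IsLocalMin (fun z => f z + lam * (norm0 z : ℝ)) x := by
  have hcoord : ∀ᶠ z in 𝓝 x, ∀ i, lam * (if x i ≠ 0 then 1 else 0) ≤
      g i * (z i - x i) + lam * (if z i ≠ 0 then 1 else 0) :=
    eventually_all.2 fun i => (PiLp.continuous_apply 2 _ i).continuousAt.eventually
      (eventually_mul_ite_ne_zero_le_linear_add hlam (hstat i))
  filter_upwards [hcoord] with z hz
  have hinner : inner ℝ g (z - x) = ∑ i, g i * (z i - x i) := by
    simp [PiLp.inner_apply, mul_comm]
  have hpenalty : lam * (norm0 x : ℝ) ≤ inner ℝ g (z - x) + lam * norm0 z := by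
    simpa only [hinner, norm0_eq_sum, Finset.mul_sum, ← Finset.sum_add_distrib] using
      Finset.sum_le_sum fun i _ => hz i
  calc f x + lam * norm0 x ≤ f x + inner ℝ g (z - x) + lam * norm0 z := by linarith
    _ ≤ f z + lam * norm0 z := by
      gcongr
      exact hf.add_inner_sub_le (Set.mem_univ x) (Set.mem_univ z) hg

theorem memHardThresh.apply_eq_of_ne_zero {n : ℕ} {γ : ℝ} {c x : EuclideanSpace ℝ (Fin n)}
    (h : memHardThresh γ c x) {i : Fin n} (hi : x i ≠ 0) : x i = c i := by
  obtain ⟨habove, hequal, hbelow⟩ := h i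
  rcases lt_trichotomy |c i| γ with hlt | heq | hgt
  · exact absurd (hbelow hlt) hi
  · exact (hequal heq).resolve_left hi
  · exact habove hgt

theorem memHardThresh.grad_apply_eq_zero {n : ℕ} {γ t : ℝ} {g x : EuclideanSpace ℝ (Fin n)}
    (h : memHardThresh γ (x - t • g) x) (ht : t ≠ 0) {i : Fin n} (hi : x i ≠ 0) : g i = 0 := by
  have hfixed := h.apply_eq_of_ne_zero hi
  rw [PiLp.sub_apply, PiLp.smul_apply, smul_eq_mul, eq_comm, sub_eq_self, mul_eq_zero] at hfixed
  exact hfixed.resolve_left ht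

theorem fixed_point_is_local_minimizer {n : ℕ}
    (f : EuclideanSpace ℝ (Fin n) → ℝ)
    (gradf : EuclideanSpace ℝ (Fin n) → EuclideanSpace ℝ (Fin n))
    (hconv : ConvexOn ℝ Set.univ f)
    (hf : ∀ z, HasGradientAt f (gradf z) z)
    (lam L μ : ℝ) (hlam : 0 < lam) (hL : 0 < L) (hμ : 0 < μ)
    (xs : EuclideanSpace ℝ (Fin n))
    (hfix : memHardThresh (Real.sqrt (2 * lam / (L + μ)))
      (xs - (1 / (L + μ)) • gradf xs) xs) :
    (∀ i : Fin n, xs i ≠ 0 → gradf xs i = 0) ∧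
      IsLocalMin (fun z => f z + lam * (norm0 z : ℝ)) xs := by
  have hstep : 1 / (L + μ) ≠ 0 := by positivity
  have hstat : ∀ i, xs i ≠ 0 → gradf xs i = 0 := fun i => hfix.grad_apply_eq_zero hstep
  exact ⟨hstat, isLocalMin_add_mul_norm0 hconv (hf xs) hstat hlam⟩
end

section
/- Let f be convex differentiable with λ > 0 and x* ∈ R^n satisfy (∇f(x*))_i = 0 for all i ∉ I(x*), where I(x*) = {i : x*_i = 0}. Define the neighborhood U = {Δx : ‖Δx‖_∞ < (1/2) min_{i∈I(x*)} min(λ/|(∇f(x*))_i|, 1), and |Δx_i| < |x*_i| for all i ∉ I(x*)}. Then for every Δx ∈ U, f(x*+Δx) + λ‖x*+Δx‖₀ ≥ f(x*) + λ‖x*‖₀. -/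
open scoped Classical

/-!
Convexity gives `f (x* + Δx) - f x* ≥ ⟪∇f x*, Δx⟫ = ∑ᵢ (∇f x*)ᵢ Δxᵢ`. Off `I(x*)` the gradient
vanishes, and on `I(x*)` a coordinate with `Δxᵢ ≠ 0` contributes more than `-λ`, since
`|Δxᵢ| < λ / |(∇f x*)ᵢ|`. Each such coordinate is a new nonzero entry of `x* + Δx`, while
`|Δxᵢ| < |x*ᵢ|` keeps the old support, so the penalty `λ ‖·‖₀` grows by at least `λ` per such
coordinate and pays for the loss in `f`.
-/

theorem ConvexOn.add_apply_sub_le_of_hasFDerivAt {E : Type*} [NormedAddCommGroup E]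
    [NormedSpace ℝ E] {f : E → ℝ} {f' : E →L[ℝ] ℝ} {x : E} (hconv : ConvexOn ℝ Set.univ f)
    (hf : HasFDerivAt f f' x) (y : E) : f x + f' (y - x) ≤ f y := by
  set φ : ℝ → ℝ := f ∘ AffineMap.lineMap x y
  have hφ : ConvexOn ℝ Set.univ φ := by
    simpa using hconv.comp_affineMap (AffineMap.lineMap x y)
  have hf₀ : HasFDerivAt f f' (AffineMap.lineMap x y (0 : ℝ)) := by
    rwa [AffineMap.lineMap_apply_zero]
  have hφ' : HasDerivAt φ (f' (y - x)) 0 :=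
    hf₀.comp_hasDerivAt 0 AffineMap.hasDerivAt_lineMap
  have hslope := hφ.le_slope_of_hasDerivAt (Set.mem_univ 0) (Set.mem_univ 1) one_pos hφ'
  simp only [slope_def_field, sub_zero, div_one, φ, Function.comp_apply,
    AffineMap.lineMap_apply_one, AffineMap.lineMap_apply_zero] at hslope
  linarith

theorem ConvexOn.add_inner_sub_le_of_hasGradientAt {E : Type*} [NormedAddCommGroup E]
    [InnerProductSpace ℝ E] [CompleteSpace E] {f : E → ℝ} {g x : E}
    (hconv : ConvexOn ℝ Set.univ f) (hf : HasGradientAt f g x) (y : E) :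
    f x + inner ℝ g (y - x) ≤ f y := by
  simpa only [InnerProductSpace.toDual_apply_apply] using
    hconv.add_apply_sub_le_of_hasFDerivAt hf.hasFDerivAt y

theorem abs_mul_lt_of_abs_lt_half_min {a d lam : ℝ} (hlam : 0 < lam)
    (hd : |d| < 1 / 2 * (if a = 0 then 1 else min (lam / |a|) 1)) : |a * d| < lam := by
  by_cases ha : a = 0
  · simpa [ha] using hlam
  have ha' : 0 < |a| := abs_pos.mpr ha
  rw [if_neg ha] at hd
  have hmin : 0 ≤ min (lam / |a|) 1 := le_min (div_pos hlam ha').le zero_le_one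
  have hd' : |d| < lam / |a| := by linarith [min_le_left (lam / |a|) 1]
  rwa [abs_mul, ← lt_div_iff₀' ha']

section Coordinates

variable {ι : Type*} [Fintype ι]

noncomputable def activatedCoords (x Δx : EuclideanSpace ℝ ι) : Finset ι :=
  Finset.univ.filter fun i => x i = 0 ∧ Δx i ≠ 0

theorem neg_mul_card_activatedCoords_le_inner {lam : ℝ} {x g Δx : EuclideanSpace ℝ ι}
    (hg : ∀ i, x i ≠ 0 → g i = 0) (hbound : ∀ i, x i = 0 → |g i * Δx i| < lam) :
    -(lam * (activatedCoords x Δx).card) ≤ inner ℝ g Δx := by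
  have hsum : inner ℝ g Δx = ∑ i ∈ activatedCoords x Δx, g i * Δx i := by
    rw [activatedCoords, Finset.sum_filter_of_ne]
    · simp [PiLp.inner_apply, mul_comm]
    · intro i _ hi
      exact ⟨not_imp_comm.mp (hg i) (left_ne_zero_of_mul hi), right_ne_zero_of_mul hi⟩
  have hterm : ∀ i ∈ activatedCoords x Δx, -lam ≤ g i * Δx i := fun i hi =>
    (abs_lt.mp (hbound i (Finset.mem_filter.mp hi).2.1)).1.le
  have := Finset.card_nsmul_le_sum _ _ _ hterm
  rw [nsmul_eq_mul] at this
  linarith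

end Coordinates

theorem norm0_add_card_activatedCoords_le {n : ℕ} {x Δx : EuclideanSpace ℝ (Fin n)}
    (hΔx : ∀ i, x i ≠ 0 → |Δx i| < |x i|) :
    norm0 x + (activatedCoords x Δx).card ≤ norm0 (x + Δx) := by
  have hdisj : Disjoint (Finset.univ.filter fun i => x i ≠ 0) (activatedCoords x Δx) := by
    rw [activatedCoords, Finset.disjoint_filter]
    exact fun i _ hx hact => hx hact.1
  rw [norm0, ← Finset.card_union_of_disjoint hdisj, norm0]
  refine Finset.card_le_card fun i hi => Finset.mem_filter.mpr ⟨Finset.mem_univ i, ?_⟩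
  rw [PiLp.add_apply]
  simp only [Finset.mem_union, Finset.mem_filter, Finset.mem_univ, true_and, activatedCoords] at hi
  rcases hi with hx | ⟨hx, hΔ⟩
  · intro hsum
    have := hΔx i hx
    rw [eq_neg_of_add_eq_zero_right hsum, abs_neg] at this
    exact lt_irrefl _ this
  · rwa [hx, zero_add]

theorem local_min_on_neighborhood {n : ℕ}
    (f : EuclideanSpace ℝ (Fin n) → ℝ)
    (gradf : EuclideanSpace ℝ (Fin n) → EuclideanSpace ℝ (Fin n))
    (hconv : ConvexOn ℝ Set.univ f)
    (hf : ∀ z, HasGradientAt f (gradf z) z)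
    (lam : ℝ) (hlam : 0 < lam)
    (xs : EuclideanSpace ℝ (Fin n))
    -- the gradient vanishes on the support of x*
    (hgrad : ∀ i : Fin n, xs i ≠ 0 → gradf xs i = 0)
    (Δx : EuclideanSpace ℝ (Fin n))
    -- ‖Δx‖_∞ < (1/2) min_{i ∈ I(x*)} min(λ/|(∇f(x*))_i|, 1), with λ/0 read as +∞
    (hU1 : ∀ j i : Fin n, xs i = 0 →
      |Δx j| < 1 / 2 * (if gradf xs i = 0 then 1 else min (lam / |gradf xs i|) 1))
    -- |Δx_i| < |x*_i| for all i ∉ I(x*)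
    (hU2 : ∀ i : Fin n, xs i ≠ 0 → |Δx i| < |xs i|) :
    f xs + lam * (norm0 xs : ℝ) ≤ f (xs + Δx) + lam * (norm0 (xs + Δx) : ℝ) := by
  have hfirst := hconv.add_inner_sub_le_of_hasGradientAt (hf xs) (xs + Δx)
  rw [add_sub_cancel_left] at hfirst
  have hinner := neg_mul_card_activatedCoords_le_inner hgrad fun i hi =>
    abs_mul_lt_of_abs_lt_half_min hlam (hU1 i i hi)
  have hcard : (norm0 xs : ℝ) + (activatedCoords xs Δx).card ≤ norm0 (xs + Δx) := by
    exact_mod_cast norm0_add_card_activatedCoords_le hU2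
  linarith [mul_le_mul_of_nonneg_left hcard hlam.le]
end

section
/- Let Q be symmetric positive semidefinite with smallest nonzero eigenvalue λ_t, and let H be symmetric with mI ⪯ H ⪯ MI for some 0 < m ≤ M, and suppose λ_max(Q) ≤ L. Then for any vector e, ‖e‖²_Q − ⟨e, QHQe⟩²/(eᵀ QHQHQ e) ≤ (1 − mλ_t/(ML)) ‖e‖²_Q (with the convention that the subtracted fraction is 0 when QHQe = 0 and Qe = 0), establishing a linear contraction factor 1 − mλ_t/(ML) ∈ [0,1). -/
/-!
Put `v = Qe`, `w = Hv`, so that the subtracted fraction is `a² / b` with `a = vᵀHv` and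
`b = wᵀQw`. Spectral calculus turns the hypotheses into `m‖v‖² ≤ a`, `‖w‖² ≤ M a` (from
`H² ⪯ M H`), `b ≤ L‖w‖²`, and `λ_t eᵀQe ≤ ‖v‖²` (from `λ_t Q ⪯ Q²`, valid because the spectrum of
`Q` misses `(0, λ_t)`). Hence `b ≤ M L a` and `a² / b ≥ a / (M L) ≥ m λ_t eᵀQe / (M L)`.
If `b = 0` then `Qw = 0`, so `a = 0` and `eᵀQe = 0`, in accordance with `a² / 0 = 0`.
-/

open Matrix
open scoped MatrixOrder

section SpectralOrder

variable {A : Type*} [TopologicalSpace A] [Ring A] [StarRing A] [PartialOrder A]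
  [StarOrderedRing A] [Algebra ℝ A] [ContinuousFunctionalCalculus ℝ A IsSelfAdjoint]
  [NonnegSpectrumClass ℝ A] {a : A}

lemma smul_le_sq_iff_forall_spectrum (c : ℝ) (ha : IsSelfAdjoint a) :
    c • a ≤ a ^ 2 ↔ ∀ x ∈ spectrum ℝ a, c * x ≤ x ^ 2 := by
  rw [← cfc_const_mul_id (R := ℝ) c a, ← cfc_pow_id (R := ℝ) a 2]
  exact cfc_le_iff ..

lemma sq_le_smul_iff_forall_spectrum (c : ℝ) (ha : IsSelfAdjoint a) :
    a ^ 2 ≤ c • a ↔ ∀ x ∈ spectrum ℝ a, x ^ 2 ≤ c * x := by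
  rw [← cfc_const_mul_id (R := ℝ) c a, ← cfc_pow_id (R := ℝ) a 2]
  exact cfc_le_iff ..

end SpectralOrder

namespace Matrix

variable {ι : Type*} [Fintype ι]

lemma IsSymm.dotProduct_mulVec {α : Type*} [CommSemiring α] {A : Matrix ι ι α} (hA : A.IsSymm)
    (x y : ι → α) : x ⬝ᵥ A *ᵥ y = (A *ᵥ x) ⬝ᵥ y := by
  rw [Matrix.dotProduct_mulVec, ← vecMul_transpose, hA.eq]

lemma IsSymm.dotProduct_sq_mulVec [DecidableEq ι] {α : Type*} [CommSemiring α] {A : Matrix ι ι α}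
    (hA : A.IsSymm) (x : ι → α) : x ⬝ᵥ (A ^ 2) *ᵥ x = (A *ᵥ x) ⬝ᵥ (A *ᵥ x) := by
  rw [sq, ← mulVec_mulVec, hA.dotProduct_mulVec]

lemma dotProduct_mulVec_le_of_le {A B : Matrix ι ι ℝ} (h : A ≤ B) (x : ι → ℝ) :
    x ⬝ᵥ A *ᵥ x ≤ x ⬝ᵥ B *ᵥ x := by
  have := (le_iff.mp h).dotProduct_mulVec_nonneg x
  simp only [star_trivial, sub_mulVec, dotProduct_sub] at this
  linarith

lemma dotProduct_algebraMap_mulVec [DecidableEq ι] (c : ℝ) (x : ι → ℝ) :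
    x ⬝ᵥ algebraMap ℝ (Matrix ι ι ℝ) c *ᵥ x = c * (x ⬝ᵥ x) := by
  simp [Algebra.algebraMap_eq_smul_one, smul_mulVec]

lemma dotProduct_smul_mulVec (c : ℝ) (A : Matrix ι ι ℝ) (x : ι → ℝ) :
    x ⬝ᵥ (c • A) *ᵥ x = c * (x ⬝ᵥ A *ᵥ x) := by
  simp [smul_mulVec]

variable [DecidableEq ι] {A : Matrix ι ι ℝ}

lemma dotProduct_mulVec_le_of_forall_spectrum_le (hA : A.IsHermitian) {L : ℝ}
    (h : ∀ x ∈ spectrum ℝ A, x ≤ L) (x : ι → ℝ) : x ⬝ᵥ A *ᵥ x ≤ L * (x ⬝ᵥ x) := by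
  rw [← dotProduct_algebraMap_mulVec]
  exact dotProduct_mulVec_le_of_le ((le_algebraMap_iff_spectrum_le hA.isSelfAdjoint).mpr h) x

lemma mul_dotProduct_mulVec_le_of_forall_spectrum (hA : A.IsHermitian) {c : ℝ}
    (h : ∀ x ∈ spectrum ℝ A, c * x ≤ x ^ 2) (x : ι → ℝ) :
    c * (x ⬝ᵥ A *ᵥ x) ≤ (A *ᵥ x) ⬝ᵥ (A *ᵥ x) := by
  rw [← dotProduct_smul_mulVec, ← (isHermitian_iff_isSymm.mp hA).dotProduct_sq_mulVec]
  exact dotProduct_mulVec_le_of_le ((smul_le_sq_iff_forall_spectrum c hA.isSelfAdjoint).mpr h) x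

lemma mulVec_dotProduct_mulVec_le_of_forall_spectrum (hA : A.IsHermitian) {c : ℝ}
    (h : ∀ x ∈ spectrum ℝ A, x ^ 2 ≤ c * x) (x : ι → ℝ) :
    (A *ᵥ x) ⬝ᵥ (A *ᵥ x) ≤ c * (x ⬝ᵥ A *ᵥ x) := by
  rw [← dotProduct_smul_mulVec, ← (isHermitian_iff_isSymm.mp hA).dotProduct_sq_mulVec]
  exact dotProduct_mulVec_le_of_le ((sq_le_smul_iff_forall_spectrum c hA.isSelfAdjoint).mpr h) x

end Matrix

lemma sub_sq_div_le_one_sub_div_mul {m lamt κ a b c d : ℝ} (hm : 0 < m) (hlt : 0 < lamt)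
    (hκ : 0 < κ) (hd : 0 ≤ d) (hb : 0 ≤ b) (hab : b = 0 → a = 0) (hca : m * c ≤ a)
    (hdc : lamt * d ≤ c) (hba : b ≤ κ * a) :
    d - a ^ 2 / b ≤ (1 - m * lamt / κ) * d := by
  rcases hb.eq_or_lt with hb0 | hbpos
  · have ha : a = 0 := hab hb0.symm
    have hc : c ≤ 0 := nonpos_of_mul_nonpos_right (ha ▸ hca) hm
    have hd0 : d = 0 := le_antisymm (nonpos_of_mul_nonpos_right (hdc.trans hc) hlt) hd
    simp [hd0, ha]
  · have ha : 0 < a := pos_of_mul_pos_right (hbpos.trans_le hba) hκ.le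
    calc d - a ^ 2 / b ≤ d - a / κ := by
          have : a / κ = a ^ 2 / (κ * a) := by field_simp
          rw [this]; gcongr
      _ ≤ d - m * lamt / κ * d := by
          rw [div_mul_eq_mul_div]; gcongr; nlinarith
      _ = (1 - m * lamt / κ) * d := by ring

theorem linear_contraction_factor {n : ℕ}
    (Q H : Matrix (Fin n) (Fin n) ℝ) (hQ : Q.PosSemidef) (hH : H.IsSymm)
    (m M L lamt : ℝ) (hm : 0 < m) (hmM : m ≤ M)
    -- m I ⪯ H ⪯ M I
    (hHlow : (H - m • (1 : Matrix (Fin n) (Fin n) ℝ)).PosSemidef)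
    (hHup : ((M • (1 : Matrix (Fin n) (Fin n) ℝ)) - H).PosSemidef)
    -- lamt is the smallest nonzero eigenvalue of Q
    (hlt : 0 < lamt) (hmem : lamt ∈ spectrum ℝ Q)
    (hmin : ∀ lam ∈ spectrum ℝ Q, lam = 0 ∨ lamt ≤ lam)
    -- λ_max(Q) ≤ L
    (hLmax : ∀ lam ∈ spectrum ℝ Q, lam ≤ L) :
    ∀ e : Fin n → ℝ,
      e ⬝ᵥ Q *ᵥ e - (e ⬝ᵥ Q *ᵥ (H *ᵥ (Q *ᵥ e))) ^ 2
          / (e ⬝ᵥ Q *ᵥ (H *ᵥ (Q *ᵥ (H *ᵥ (Q *ᵥ e)))))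
        ≤ (1 - m * lamt / (M * L)) * (e ⬝ᵥ Q *ᵥ e) := by
  intro e
  have hQsym : Q.IsSymm := isHermitian_iff_isSymm.mp hQ.isHermitian
  have hH' : H.IsHermitian := isHermitian_iff_isSymm.mpr hH
  have hHm : algebraMap ℝ _ m ≤ H := by rwa [Algebra.algebraMap_eq_smul_one, le_iff]
  have hHM : H ≤ algebraMap ℝ _ M := by rwa [Algebra.algebraMap_eq_smul_one, le_iff]
  have hHspec : ∀ x ∈ spectrum ℝ H, m ≤ x ∧ x ≤ M := fun x hx =>
    ⟨(algebraMap_le_iff_le_spectrum hH'.isSelfAdjoint).mp hHm x hx,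
      (le_algebraMap_iff_spectrum_le hH'.isSelfAdjoint).mp hHM x hx⟩
  set v := Q *ᵥ e
  set w := H *ᵥ v
  have ha : e ⬝ᵥ Q *ᵥ w = v ⬝ᵥ H *ᵥ v := hQsym.dotProduct_mulVec e w
  have hb : e ⬝ᵥ Q *ᵥ (H *ᵥ (Q *ᵥ w)) = w ⬝ᵥ Q *ᵥ w := by
    rw [hQsym.dotProduct_mulVec, hH.dotProduct_mulVec]
  have hvHv : m * (v ⬝ᵥ v) ≤ v ⬝ᵥ H *ᵥ v := by
    simpa only [dotProduct_algebraMap_mulVec] using dotProduct_mulVec_le_of_le hHm v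
  have hev : lamt * (e ⬝ᵥ Q *ᵥ e) ≤ v ⬝ᵥ v :=
    mul_dotProduct_mulVec_le_of_forall_spectrum hQ.isHermitian (fun x hx => by
      rcases hmin x hx with rfl | hx' <;> nlinarith) e
  have hww : w ⬝ᵥ w ≤ M * (v ⬝ᵥ H *ᵥ v) :=
    mulVec_dotProduct_mulVec_le_of_forall_spectrum hH' (fun x hx => by
      obtain ⟨h1, h2⟩ := hHspec x hx; nlinarith) v
  have hwQw : w ⬝ᵥ Q *ᵥ w ≤ L * (w ⬝ᵥ w) :=
    dotProduct_mulVec_le_of_forall_spectrum_le hQ.isHermitian hLmax w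
  have hL : 0 < L := hlt.trans_le (hLmax lamt hmem)
  rw [ha, hb]
  refine sub_sq_div_le_one_sub_div_mul hm hlt (by nlinarith) ?_ ?_ ?_ hvHv hev (by nlinarith)
  · simpa using hQ.dotProduct_mulVec_nonneg e
  · simpa using hQ.dotProduct_mulVec_nonneg w
  · intro hb0
    rw [← ha, (hQ.dotProduct_mulVec_zero_iff w).mp (by simpa using hb0), dotProduct_zero]
end

section
/- Let Q be symmetric positive definite and {H_k} a sequence of symmetric positive definite matrices. Define d_k = −H_k g_k for vectors g_k ≠ 0, and α_k = ⟨H_k^{-1} d_k, d_k⟩ / ⟨d_k, Q d_k⟩. If ‖(H_k^{-1} − Q) d_k‖ / ‖d_k‖ → 0 as k → ∞, then α_k → 1. -/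
open Matrix Filter

/-- The Euclidean norm of a vector in `Fin n → ℝ`. -/
noncomputable def enorm' {n : ℕ} (v : Fin n → ℝ) : ℝ := Real.sqrt (v ⬝ᵥ v)

/-! Since `α k - 1 = ⟪(H k⁻¹ - Q) d k, d k⟫ / ⟪d k, Q d k⟫` and `⟪d, Q d⟫ ≥ λ_min(Q) ‖d‖²`, the
Cauchy–Schwarz inequality gives `|α k - 1| ≤ λ_min(Q)⁻¹ ‖(H k⁻¹ - Q) d k‖ / ‖d k‖`, which tends
to `0`. The bound `λ_min(Q) ‖d‖² ≤ ⟪d, Q d⟫` holds because `Q - λ_min(Q) • 1` is conjugate to a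
nonnegative diagonal matrix. -/

namespace Matrix

variable {ι : Type*} [Fintype ι]

theorem IsHermitian.posSemidef_sub_smul_one [DecidableEq ι] {A : Matrix ι ι ℝ}
    (hA : A.IsHermitian) {c : ℝ} (hc : ∀ i, c ≤ hA.eigenvalues i) : (A - c • 1).PosSemidef := by
  set U : Matrix ι ι ℝ := ↑hA.eigenvectorUnitary
  have hU : U * Uᴴ = 1 := Unitary.coe_mul_star_self hA.eigenvectorUnitary
  have hA_eq : A = U * diagonal hA.eigenvalues * Uᴴ := hA.spectral_theorem
  have hdecomp : A - c • 1 = U * diagonal (fun i => hA.eigenvalues i - c) * Uᴴ := by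
    calc A - c • 1 = U * diagonal hA.eigenvalues * Uᴴ - U * (c • 1) * Uᴴ := by
          rw [mul_smul_comm, mul_one, smul_mul_assoc, hU, ← hA_eq]
      _ = U * diagonal (fun i => hA.eigenvalues i - c) * Uᴴ := by
          rw [← sub_mul, ← mul_sub, smul_one_eq_diagonal, diagonal_sub]
  rw [hdecomp]
  exact (posSemidef_diagonal_iff.mpr fun i => sub_nonneg.mpr (hc i)).mul_mul_conjTranspose_same U

theorem IsHermitian.mul_dotProduct_self_le_dotProduct_mulVec [DecidableEq ι] {A : Matrix ι ι ℝ}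
    (hA : A.IsHermitian) {c : ℝ} (hc : ∀ i, c ≤ hA.eigenvalues i) (v : ι → ℝ) :
    c * (v ⬝ᵥ v) ≤ v ⬝ᵥ A *ᵥ v := by
  have := (hA.posSemidef_sub_smul_one hc).dotProduct_mulVec_nonneg v
  simpa [sub_mulVec, dotProduct_sub, smul_mulVec, sub_nonneg] using this

theorem PosDef.exists_pos_mul_dotProduct_self_le {A : Matrix ι ι ℝ} (hA : A.PosDef) :
    ∃ c > 0, ∀ v : ι → ℝ, c * (v ⬝ᵥ v) ≤ v ⬝ᵥ A *ᵥ v := by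
  classical
  cases isEmpty_or_nonempty ι
  · exact ⟨1, one_pos, fun v => by simp [Subsingleton.elim v 0]⟩
  obtain ⟨i, hi⟩ := Finite.exists_min hA.1.eigenvalues
  exact ⟨_, hA.eigenvalues_pos i, hA.1.mul_dotProduct_self_le_dotProduct_mulVec hi⟩

end Matrix

theorem enorm'_sq {n : ℕ} (v : Fin n → ℝ) : enorm' v ^ 2 = v ⬝ᵥ v :=
  Real.sq_sqrt (by simpa using dotProduct_self_star_nonneg v)

theorem enorm'_pos {n : ℕ} {v : Fin n → ℝ} (hv : v ≠ 0) : 0 < enorm' v :=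
  Real.sqrt_pos.mpr (by simpa using dotProduct_self_star_pos_iff.mpr hv)

theorem abs_dotProduct_le_enorm'_mul_enorm' {n : ℕ} (x y : Fin n → ℝ) :
    |x ⬝ᵥ y| ≤ enorm' x * enorm' y := by
  rw [enorm', enorm', ← Real.sqrt_mul (by simpa using dotProduct_self_star_nonneg x)]
  apply Real.abs_le_sqrt
  simpa [dotProduct, sq] using Finset.sum_mul_sq_le_sq_mul_sq Finset.univ x y

theorem abs_div_dotProduct_mulVec_sub_one_le {n : ℕ} {M Q : Matrix (Fin n) (Fin n) ℝ} {c : ℝ}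
    (hc : 0 < c) (hQ : ∀ v, c * (v ⬝ᵥ v) ≤ v ⬝ᵥ Q *ᵥ v) {d : Fin n → ℝ} (hd : d ≠ 0) :
    |(M *ᵥ d) ⬝ᵥ d / (d ⬝ᵥ Q *ᵥ d) - 1| ≤ c⁻¹ * (enorm' ((M - Q) *ᵥ d) / enorm' d) := by
  have hd_pos : 0 < enorm' d := enorm'_pos hd
  have hQd_ge : c * enorm' d ^ 2 ≤ d ⬝ᵥ Q *ᵥ d := enorm'_sq d ▸ hQ d
  have hQd_pos : 0 < d ⬝ᵥ Q *ᵥ d := lt_of_lt_of_le (by positivity) hQd_ge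
  calc |(M *ᵥ d) ⬝ᵥ d / (d ⬝ᵥ Q *ᵥ d) - 1|
      = |((M - Q) *ᵥ d) ⬝ᵥ d| / (d ⬝ᵥ Q *ᵥ d) := by
        rw [div_sub_one hQd_pos.ne', sub_mulVec, sub_dotProduct, dotProduct_comm (Q *ᵥ d),
          abs_div, abs_of_pos hQd_pos]
    _ ≤ enorm' ((M - Q) *ᵥ d) * enorm' d / (c * enorm' d ^ 2) :=
        div_le_div₀ (mul_nonneg (Real.sqrt_nonneg _) hd_pos.le)
          (abs_dotProduct_le_enorm'_mul_enorm' _ _) (by positivity) hQd_ge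
    _ = c⁻¹ * (enorm' ((M - Q) *ᵥ d) / enorm' d) := by field_simp

theorem steplength_tendsto_one {n : ℕ}
    (Q : Matrix (Fin n) (Fin n) ℝ) (hQ : Q.PosDef)
    (H : ℕ → Matrix (Fin n) (Fin n) ℝ) (hH : ∀ k, (H k).PosDef)
    (g : ℕ → Fin n → ℝ) (hg : ∀ k, g k ≠ 0)
    (d : ℕ → Fin n → ℝ) (hd : ∀ k, d k = -((H k) *ᵥ g k))
    (α : ℕ → ℝ)
    (hα : ∀ k, α k = ((H k)⁻¹ *ᵥ d k) ⬝ᵥ d k / (d k ⬝ᵥ Q *ᵥ d k))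
    (happrox : Tendsto (fun k => enorm' (((H k)⁻¹ - Q) *ᵥ d k) / enorm' (d k))
      atTop (nhds 0)) :
    Tendsto α atTop (nhds 1) := by
  obtain ⟨c, hc, hQc⟩ := hQ.exists_pos_mul_dotProduct_self_le
  have hd_ne : ∀ k, d k ≠ 0 := fun k => by
    rw [hd k, neg_ne_zero, ← mulVec_zero (H k)]
    exact (mulVec_injective_iff_isUnit.mpr (hH k).isUnit).ne (hg k)
  have hbound : ∀ k, ‖α k - 1‖ ≤ c⁻¹ * (enorm' (((H k)⁻¹ - Q) *ᵥ d k) / enorm' (d k)) :=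
    fun k => hα k ▸ abs_div_dotProduct_mulVec_sub_one_le hc hQc (hd_ne k)
  rw [← tendsto_sub_nhds_zero_iff]
  exact squeeze_zero_norm hbound (by simpa using happrox.const_mul c⁻¹)
end
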